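/- arXiv:2507.02759 — 2 statements merged into one kernel-verified Lean document; each statement's English description precedes it below -/
import Mathlib

section
/- If S is a binomial random variable with parameters n = 6M and p = 1/2, then P(S ≤ M) ≤ 2^M · (3/4)^{6M} ≤ 2^{-M}. -/
/-! Exponential Markov (Chernoff) bound with θ = 1/2: on `{S ≤ M}` we have `1 ≤ 2^M θ^S`, and
`E[θ^S] = (θ p + (1 - p))^n = (3/4)^(6M)`. Finally `2 (3/4)^6 = 729/2048 ≤ 1/2`. -/

open MeasureTheory ProbabilityTheory
open scoped NNReal ENNReal

set_option linter.deprecated false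

theorem ENNReal.two_mul_coe_half : (2 : ℝ≥0∞) * ((1 / 2 : ℝ≥0) : ℝ≥0∞) = 1 := by
  rw [one_div, ENNReal.coe_inv two_ne_zero]
  exact ENNReal.mul_inv_cancel two_ne_zero (by simp)

namespace PMF

theorem sum_pow_mul_binomial (p : ℝ≥0) (h : p ≤ 1) (n : ℕ) (θ : ℝ≥0) :
    ∑ i : Fin (n + 1), (θ : ℝ≥0∞) ^ (i : ℕ) * binomial p h n i = ↑((θ * p + (1 - p)) ^ n) := by
  rw [add_pow, ← Fin.sum_univ_eq_sum_range
    (fun m => (θ * p) ^ m * (1 - p) ^ (n - m) * (n.choose m : ℝ≥0))]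
  push_cast
  refine Finset.sum_congr rfl fun i _ => ?_
  rw [binomial_apply, Fin.val_last]
  ring

theorem pow_mul_binomial_toMeasure_le (p : ℝ≥0) (h : p ≤ 1) (n m : ℕ) {θ : ℝ≥0} (hθ : θ ≤ 1) :
    (θ : ℝ≥0∞) ^ m * (binomial p h n).toMeasure {k | (k : ℕ) ≤ m}
      ≤ ↑((θ * p + (1 - p)) ^ n) := by
  rw [toMeasure_apply_fintype, Finset.mul_sum, ← sum_pow_mul_binomial p h]
  refine Finset.sum_le_sum fun i _ => ?_
  by_cases hi : (i : ℕ) ≤ m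
  · rw [Set.indicator_of_mem (show i ∈ {k : Fin (n + 1) | (k : ℕ) ≤ m} from hi)]
    exact mul_le_mul_left (pow_le_pow_right_of_le_one' (by exact_mod_cast hθ) hi) _
  · simp [Set.indicator_of_notMem (show i ∉ {k : Fin (n + 1) | (k : ℕ) ≤ m} from hi)]

end PMF

theorem binomial_lower_tail (M : ℕ) :
    (PMF.binomial (1 / 2) (by norm_num) (6 * M)).toMeasure {k | (k : ℕ) ≤ M}
      ≤ 2 ^ M * (3 / 4 : ENNReal) ^ (6 * M) ∧
    (2 : ENNReal) ^ M * (3 / 4 : ENNReal) ^ (6 * M) ≤ (2 : ENNReal)⁻¹ ^ M := by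
  have half_mgf : (1 / 2 : ℝ≥0) * (1 / 2) + (1 - 1 / 2) = 3 / 4 := by
    rw [← NNReal.coe_inj]; norm_num [NNReal.coe_sub]
  constructor
  · calc _ = 2 ^ M * (((1 / 2 : ℝ≥0) : ℝ≥0∞) ^ M *
          (PMF.binomial (1 / 2) (by norm_num) (6 * M)).toMeasure {k | (k : ℕ) ≤ M}) := by
          rw [← mul_assoc, ← mul_pow, ENNReal.two_mul_coe_half, one_pow, one_mul]
      _ ≤ 2 ^ M * (3 / 4 : ENNReal) ^ (6 * M) := by
          gcongr
          refine (PMF.pow_mul_binomial_toMeasure_le _ _ _ _ (by norm_num)).trans_eq ?_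
          rw [half_mgf]; push_cast; norm_num
  · rw [pow_mul, ← mul_pow]
    gcongr
    rw [← ENNReal.toReal_le_toReal (by finiteness) (by simp)]
    norm_num
end

section
/- Consider the QuickSort-style recursion in which, for a fixed element e in an array, the subproblem size satisfies E[Y_i | Y_{i-1}] ≤ (3/4) Y_{i-1} with Y_0 = n. Then for any constant c ≥ 1 and M = c·log_2 n, the probability that Y_{6M} ≥ 1 (i.e., the recursion depth for e exceeds 6M) is at most 1/n^c, and by a union bound the probability that the recursion depth of QuickSort on n elements exceeds 6c·log_2 n is at most 1/n^{c-1}. -/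
/-!
Taking expectations in the contraction `E[Y_{i+1} | Y_0, …, Y_i] ≤ (3/4) Y_i` gives
`E[Y_k] ≤ (3/4)^k n`. Since `(3/4)^6 < 1/4`, after `6M` steps with `M = c log₂ n` this is at most
`n · 4^{-M} = n^{1-2c} ≤ n^{-c}`, which bounds `P(Y_{6M} ≥ 1)` by Markov's inequality; a union
bound over the `n` elements costs a factor `n`.
-/

open MeasureTheory ProbabilityTheory

section Contraction

variable {Ω : Type*} {m0 : MeasurableSpace Ω} {μ : Measure Ω} [IsFiniteMeasure μ]

theorem integral_le_integral_of_condExp_le {m : MeasurableSpace Ω} (hm : m ≤ m0)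
    {f g : Ω → ℝ} (hg : Integrable g μ) (hfg : μ[f | m] ≤ᵐ[μ] g) :
    ∫ ω, f ω ∂μ ≤ ∫ ω, g ω ∂μ := by
  rw [← integral_condExp hm]
  exact integral_mono_ae integrable_condExp hg hfg

theorem integral_le_pow_mul_of_condExp_le {X : ℕ → Ω → ℝ} {ℱ : ℕ → MeasurableSpace Ω}
    (hℱ : ∀ i, ℱ i ≤ m0) (hX : ∀ i, Integrable (X i) μ) {r : ℝ} (hr : 0 ≤ r)
    (hcontr : ∀ i, μ[X (i + 1) | ℱ i] ≤ᵐ[μ] fun ω => r * X i ω) (k : ℕ) :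
    ∫ ω, X k ω ∂μ ≤ r ^ k * ∫ ω, X 0 ω ∂μ := by
  induction k with
  | zero => simp
  | succ k ih =>
    calc ∫ ω, X (k + 1) ω ∂μ ≤ ∫ ω, r * X k ω ∂μ :=
          integral_le_integral_of_condExp_le (hℱ k) ((hX k).const_mul r) (hcontr k)
      _ = r * ∫ ω, X k ω ∂μ := integral_const_mul r _
      _ ≤ r ^ (k + 1) * ∫ ω, X 0 ω ∂μ := by
          rw [pow_succ', mul_assoc]
          exact mul_le_mul_of_nonneg_left ih hr

theorem measure_setOf_one_le_le_ofReal_integral {f : Ω → ℝ} (hf : Integrable f μ)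
    (hf_nonneg : ∀ ω, 0 ≤ f ω) :
    μ {ω | 1 ≤ f ω} ≤ ENNReal.ofReal (∫ ω, f ω ∂μ) := by
  rw [← ENNReal.ofReal_toReal (measure_ne_top μ _)]
  refine ENNReal.ofReal_le_ofReal ?_
  have markov := mul_meas_ge_le_integral_of_nonneg (ae_of_all μ hf_nonneg) hf 1
  rwa [one_mul] at markov

end Contraction

theorem three_quarters_pow_ceil_six_mul_le {M : ℝ} (hM : 0 ≤ M) :
    (3 / 4 : ℝ) ^ ⌈6 * M⌉₊ ≤ 2 ^ (-2 * M) := by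
  calc (3 / 4 : ℝ) ^ ⌈6 * M⌉₊ ≤ (3 / 4 : ℝ) ^ (6 * M) := by
        rw [← Real.rpow_natCast]
        exact Real.rpow_le_rpow_of_exponent_ge (by norm_num) (by norm_num) (Nat.le_ceil _)
    _ = ((3 / 4 : ℝ) ^ (6 : ℕ)) ^ M := by
        rw [← Real.rpow_natCast, ← Real.rpow_mul (by norm_num)]
        norm_num
    _ ≤ ((2 : ℝ) ^ (-2 : ℝ)) ^ M := by
        refine Real.rpow_le_rpow (by positivity) ?_ hM
        rw [Real.rpow_neg (by norm_num)]
        norm_num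
    _ = 2 ^ (-2 * M) := by rw [← Real.rpow_mul (by norm_num)]

theorem three_quarters_pow_depth_mul_le {x c : ℝ} (hx : 1 ≤ x) (hc : 1 ≤ c) :
    (3 / 4 : ℝ) ^ ⌈6 * (c * Real.logb 2 x)⌉₊ * x ≤ 1 / x ^ c := by
  have hx0 : 0 < x := zero_lt_one.trans_le hx
  have hM : 0 ≤ c * Real.logb 2 x :=
    mul_nonneg (zero_le_one.trans hc) (Real.logb_nonneg (by norm_num) hx)
  calc (3 / 4 : ℝ) ^ ⌈6 * (c * Real.logb 2 x)⌉₊ * x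
      ≤ 2 ^ (-2 * (c * Real.logb 2 x)) * x :=
        mul_le_mul_of_nonneg_right (three_quarters_pow_ceil_six_mul_le hM) hx0.le
    _ = x ^ (1 - 2 * c) := by
        rw [show -2 * (c * Real.logb 2 x) = Real.logb 2 x * -(2 * c) by ring,
          Real.rpow_mul (by norm_num), Real.rpow_logb (by norm_num) (by norm_num) hx0,
          Real.rpow_sub hx0, Real.rpow_one, Real.rpow_neg hx0.le]
        ring
    _ ≤ x ^ (-c) := Real.rpow_le_rpow_of_exponent_le hx (by linarith)
    _ = 1 / x ^ c := by rw [Real.rpow_neg hx0.le, one_div]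

theorem mul_one_div_rpow_le_one_div_rpow_sub_one {x : ℝ} (hx : 0 ≤ x) (c : ℝ) :
    x * (1 / x ^ c) ≤ 1 / x ^ (c - 1) := by
  rcases hx.eq_or_lt with rfl | hx0
  · simp only [zero_mul, one_div, inv_nonneg]
    exact Real.rpow_nonneg le_rfl _
  · rw [Real.rpow_sub_one hx0.ne', one_div_div, mul_one_div]

theorem quicksort_depth_bound_general
    {Ω : Type*} [m0 : MeasurableSpace Ω] (μ : Measure Ω) [IsProbabilityMeasure μ]
    (n : ℕ) (c : ℝ) (hc : 1 ≤ c)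
    (M : ℝ) (hMdef : M = c * Real.logb 2 n)
    (Y : Fin n → ℕ → Ω → ℝ)
    (hmeas : ∀ e i, Measurable (Y e i))
    (hint : ∀ e i, Integrable (Y e i) μ)
    (hnonneg : ∀ e i ω, 0 ≤ Y e i ω)
    (hY0 : ∀ e ω, Y e 0 ω = n)
    (hcontr : ∀ e, ∀ i : ℕ, 1 ≤ i →
      μ[Y e i | ⨆ j ∈ Finset.range i, MeasurableSpace.comap (Y e j) (borel ℝ)]
        ≤ᵐ[μ] fun ω => (3 / 4) * Y e (i - 1) ω) :
    (∀ e, μ {ω | 1 ≤ Y e ⌈6 * M⌉₊ ω} ≤ ENNReal.ofReal (1 / (n : ℝ) ^ c)) ∧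
    μ (⋃ e, {ω | 1 ≤ Y e ⌈6 * M⌉₊ ω}) ≤ ENNReal.ofReal (1 / (n : ℝ) ^ (c - 1)) := by
  have hexp (e : Fin n) (k : ℕ) : ∫ ω, Y e k ω ∂μ ≤ (3 / 4 : ℝ) ^ k * n := by
    have hℱ (i : ℕ) :
        ⨆ j ∈ Finset.range (i + 1), MeasurableSpace.comap (Y e j) (borel ℝ) ≤ m0 :=
      iSup₂_le fun j _ => (hmeas e j).comap_le
    simpa [hY0] using integral_le_pow_mul_of_condExp_le hℱ (hint e) (by norm_num)
      (fun i => by simpa using hcontr e (i + 1) le_add_self) k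
  have hone (e : Fin n) : μ {ω | 1 ≤ Y e ⌈6 * M⌉₊ ω} ≤ ENNReal.ofReal (1 / (n : ℝ) ^ c) := by
    refine (measure_setOf_one_le_le_ofReal_integral (hint e _) (hnonneg e _)).trans
      (ENNReal.ofReal_le_ofReal ((hexp e _).trans ?_))
    rw [hMdef]
    exact three_quarters_pow_depth_mul_le (by exact_mod_cast e.pos) hc
  refine ⟨hone, ?_⟩
  calc μ (⋃ e, {ω | 1 ≤ Y e ⌈6 * M⌉₊ ω})
      ≤ ∑ e, μ {ω | 1 ≤ Y e ⌈6 * M⌉₊ ω} := measure_iUnion_fintype_le μ _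
    _ ≤ n • ENNReal.ofReal (1 / (n : ℝ) ^ c) := by
        simpa using Finset.sum_le_card_nsmul Finset.univ _ _ fun e _ => hone e
    _ ≤ ENNReal.ofReal (1 / (n : ℝ) ^ (c - 1)) := by
        rw [nsmul_eq_mul, ← ENNReal.ofReal_natCast, ← ENNReal.ofReal_mul (Nat.cast_nonneg n)]
        exact ENNReal.ofReal_le_ofReal (mul_one_div_rpow_le_one_div_rpow_sub_one n.cast_nonneg c)

theorem quicksort_depth_bound
    {Ω : Type*} [m0 : MeasurableSpace Ω] (μ : Measure Ω) [IsProbabilityMeasure μ]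
    (n : ℕ) (hn : 2 ≤ n) (c : ℝ) (hc : 1 ≤ c)
    (M : ℝ) (hMdef : M = c * Real.logb 2 n)
    (Y : Fin n → ℕ → Ω → ℝ)
    (hmeas : ∀ e i, Measurable (Y e i))
    (hint : ∀ e i, Integrable (Y e i) μ)
    (hnonneg : ∀ e i ω, 0 ≤ Y e i ω)
    (hY0 : ∀ e ω, Y e 0 ω = n)
    (hcontr : ∀ e, ∀ i : ℕ, 1 ≤ i →
      μ[Y e i | ⨆ j ∈ Finset.range i, MeasurableSpace.comap (Y e j) (borel ℝ)]
        ≤ᵐ[μ] fun ω => (3 / 4) * Y e (i - 1) ω) :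
    (∀ e, μ {ω | 1 ≤ Y e ⌈6 * M⌉₊ ω} ≤ ENNReal.ofReal (1 / (n : ℝ) ^ c)) ∧
    μ (⋃ e, {ω | 1 ≤ Y e ⌈6 * M⌉₊ ω}) ≤ ENNReal.ofReal (1 / (n : ℝ) ^ (c - 1)) :=
  quicksort_depth_bound_general (m0 := m0) μ n c hc M hMdef Y hmeas hint hnonneg hY0 hcontr
end
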